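/- arXiv:1211.2980 — 10 statements merged into one kernel-verified Lean document; each statement's English description precedes it below -/
import Mathlib

section
/- For every finite set system S ⊆ {0,1}^X and every partition of X into X' and X'', exactly one of the following holds: (1) S shatters X', or (2) the complement of S (in {0,1}^X) strongly shatters X''. -/
open Finset

variable {α : Type*} [Fintype α] [DecidableEq α]

/-- `S` shatters `Y`: every assignment on `Y` extends to a member of `S`. -/
def shatters (S : Finset (α → Bool)) (Y : Finset α) : Prop :=
  ∀ f : α → Bool, ∃ s ∈ S, ∀ a ∈ Y, s a = f a

/-- `S` strongly shatters `Y`: some assignment off `Y` has all its `Y`-extensions in `S`. -/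
def stronglyShatters (S : Finset (α → Bool)) (Y : Finset α) : Prop :=
  ∃ g : α → Bool, ∀ f : α → Bool, (fun a => if a ∈ Y then f a else g a) ∈ S

open Classical in
/-- The family of shattered subsets. -/
noncomputable def strF (S : Finset (α → Bool)) : Finset (Finset α) :=
  Finset.univ.filter (fun Y => shatters S Y)

open Classical in
/-- The family of strongly shattered subsets. -/
noncomputable def sstrF (S : Finset (α → Bool)) : Finset (Finset α) :=
  Finset.univ.filter (fun Y => stronglyShatters S Y)

/-- Shattering-extremal: shattered = strongly shattered. -/
def SE (S : Finset (α → Bool)) : Prop :=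
  ∀ Y : Finset α, shatters S Y ↔ stronglyShatters S Y

/-! For a fixed `g`, the merges of arbitrary `f` on `X'ᶜ` with `g` on `X'` are exactly the members
of `{0,1}^X` that agree with `g` on `X'`. So `g` witnesses that `Sᶜ` strongly shatters `X'ᶜ`
precisely when the pattern of `g` on `X'` is not realized by `S`, and such a `g` exists precisely
when `S` fails to shatter `X'`. -/

lemma merge_compl_eq_of_eqOn {Y : Finset α} {s g : α → Bool} (h : ∀ a ∈ Y, s a = g a) :
    (fun a => if a ∈ Yᶜ then s a else g a) = s := by
  funext a
  by_cases ha : a ∈ Y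
  · simp [ha, h a ha]
  · simp [ha]

lemma stronglyShatters_compl_compl_iff {S : Finset (α → Bool)} {Y : Finset α} :
    stronglyShatters Sᶜ Yᶜ ↔ ¬ shatters S Y := by
  constructor
  · rintro ⟨g, hg⟩ hshatters
    obtain ⟨s, hs, hsg⟩ := hshatters g
    have hmerge := hg s
    rw [merge_compl_eq_of_eqOn hsg, mem_compl] at hmerge
    exact hmerge hs
  · intro hnot
    obtain ⟨g, hg⟩ := not_forall.mp hnot
    refine ⟨g, fun f => mem_compl.mpr fun hf => hg ⟨_, hf, fun a ha => ?_⟩⟩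
    simp [ha]

theorem stmt0 (S : Finset (α → Bool)) (X' : Finset α) :
    Xor' (shatters S X') (stronglyShatters Sᶜ X'ᶜ) :=
  xor_iff_not_iff'.mpr stronglyShatters_compl_compl_iff.symm
end

section
/- For every finite set X and S ⊆ {0,1}^X, |str(S)| + |sstr({0,1}^X \ S)| = 2^{|X|}. -/
open Finset

variable {α : Type*} [Fintype α] [DecidableEq α]

/-! A pattern `g` on `Y` extends to a member of `S` iff not all of its extensions lie in `Sᶜ`.
Hence `S` shatters `Y` iff `Sᶜ` does not strongly shatter `Yᶜ`, and complementation of index sets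
maps `sstrF Sᶜ` bijectively onto the sets not shattered by `S`. -/

theorem not_stronglyShatters_compl_iff_shatters (S : Finset (α → Bool)) (Y : Finset α) :
    ¬ stronglyShatters Sᶜ Y ↔ shatters S Yᶜ := by
  simp only [stronglyShatters, shatters, not_exists, not_forall, mem_compl, not_not]
  refine forall_congr' fun g => ⟨fun ⟨f, hf⟩ => ⟨_, hf, fun a ha => ?_⟩, fun ⟨s, hs, hsg⟩ => ⟨s, ?_⟩⟩
  · simp [ha]
  · convert hs using 1
    funext a
    by_cases ha : a ∈ Y
    · simp [ha]
    · simp [ha, hsg a ha]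

open Classical in
theorem card_sstrF_compl (S : Finset (α → Bool)) :
    (sstrF Sᶜ).card = (univ.filter fun Y => ¬ shatters S Y).card := by
  refine card_nbij' compl compl (fun Y hY => ?_) (fun Y hY => ?_)
    (fun Y _ => compl_compl Y) (fun Y _ => compl_compl Y)
  · simp only [sstrF, mem_coe, mem_filter, mem_univ, true_and] at hY ⊢
    rwa [← compl_compl Y, ← not_stronglyShatters_compl_iff_shatters, not_not, compl_compl]
  · simp only [sstrF, mem_coe, mem_filter, mem_univ, true_and] at hY ⊢
    rwa [← compl_compl Y, ← not_stronglyShatters_compl_iff_shatters, not_not] at hY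

theorem stmt2 (S : Finset (α → Bool)) :
    (strF S).card + (sstrF Sᶜ).card = 2 ^ Fintype.card α := by
  classical
  rw [card_sstrF_compl, strF, card_filter_add_card_filter_not, card_univ,
    Fintype.card_finset]
end

section
/- (Sandwich theorem) For every finite set X and S ⊆ {0,1}^X: |sstr(S)| ≤ |S| ≤ |str(S)|. -/
open Finset

variable {α : Type*} [Fintype α] [DecidableEq α]

/-!
Split `S` along a coordinate `x` into `S₀ = {s ∈ S | s x = false}` and `S₁ = {s ∈ S | s x = true}`.
A set shattered by `S₀` or `S₁` avoids `x` and is shattered by `S`, and if both shatter `Y` then `S`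
shatters `insert x Y`; hence `|str S₀| + |str S₁| ≤ |str S|`. Dually, a set strongly shattered by
`S` is strongly shattered by `S₀` or `S₁` if it avoids `x`, and after erasing `x` by both if it
contains `x`; hence `|sstr S| ≤ |sstr S₀| + |sstr S₁|`. Since `|S| = |S₀| + |S₁|`, induction on `|S|`
reduces everything to `|S| ≤ 1`, where both families are `{∅}` or both are empty.
-/

lemma card_filter_eq_false_add_card_filter_eq_true {ι : Type*} (s : Finset ι) (p : ι → Bool) :
    (s.filter (p · = false)).card + (s.filter (p · = true)).card = s.card := by
  simpa only [Bool.not_eq_false] using card_filter_add_card_filter_not (s := s) (p · = false)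

section Shatters

variable {ι : Type*} {S T : Finset (ι → Bool)} {Y : Finset ι} {x : ι}

lemma exists_forall_filter_apply_eq_ssubset (hS : 1 < S.card) :
    ∃ x, ∀ b, S.filter (· x = b) ⊂ S := by
  obtain ⟨s, hs, t, ht, hst⟩ := one_lt_card.1 hS
  obtain ⟨x, hx⟩ := Function.ne_iff.1 hst
  refine ⟨x, fun b => filter_ssubset.2 ?_⟩
  by_cases hsx : s x = b
  · exact ⟨t, ht, fun htx => hx (hsx.trans htx.symm)⟩
  · exact ⟨s, hs, hsx⟩

lemma shatters.mono (h : shatters S Y) (hST : S ⊆ T) : shatters T Y := fun f =>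
  let ⟨s, hs, hsf⟩ := h f
  ⟨s, hST hs, hsf⟩

lemma shatters_empty_of_nonempty (hS : S.Nonempty) : shatters S ∅ := fun _ =>
  let ⟨s, hs⟩ := hS
  ⟨s, hs, by simp⟩

lemma notMem_of_shatters_filter {b : Bool} (h : shatters (S.filter (· x = b)) Y) : x ∉ Y := by
  intro hx
  obtain ⟨s, hs, hsf⟩ := h fun _ => !b
  have := hsf x hx
  simp_all

lemma shatters_insert_of_forall_shatters_filter [DecidableEq ι]
    (h : ∀ b, shatters (S.filter (· x = b)) Y) : shatters S (insert x Y) := by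
  intro f
  obtain ⟨s, hs, hsf⟩ := h (f x) f
  refine ⟨s, (mem_filter.1 hs).1, fun a ha => ?_⟩
  rcases mem_insert.1 ha with rfl | ha
  exacts [(mem_filter.1 hs).2, hsf a ha]

variable [DecidableEq ι]

lemma stronglyShatters.nonempty (h : stronglyShatters S Y) : S.Nonempty :=
  let ⟨g, hg⟩ := h
  ⟨_, hg g⟩

lemma stronglyShatters.eq_empty_of_card_le_one (h : stronglyShatters S Y) (hS : S.card ≤ 1) :
    Y = ∅ := by
  obtain ⟨g, hg⟩ := h
  by_contra hY
  obtain ⟨a, ha⟩ := nonempty_iff_ne_empty.2 hY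
  have := congrFun (card_le_one.1 hS _ (hg fun _ => true) _ (hg fun _ => false)) a
  simp [ha] at this

lemma stronglyShatters.exists_filter_of_notMem (h : stronglyShatters S Y) (hx : x ∉ Y) :
    ∃ b, stronglyShatters (S.filter (· x = b)) Y := by
  obtain ⟨g, hg⟩ := h
  exact ⟨g x, g, fun f => mem_filter.2 ⟨hg f, by simp [hx]⟩⟩

lemma stronglyShatters.filter_erase (h : stronglyShatters S Y) (hx : x ∈ Y) (b : Bool) :
    stronglyShatters (S.filter (· x = b)) (Y.erase x) := by
  obtain ⟨g, hg⟩ := h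
  refine ⟨Function.update g x b, fun f => mem_filter.2 ⟨?_, by simp⟩⟩
  convert hg (Function.update f x b) using 1
  funext a
  rcases eq_or_ne a x with rfl | hax
  · simp [hx]
  · simp [hax]

end Shatters

variable {S : Finset (α → Bool)} {Y : Finset α}

omit [DecidableEq α] in
lemma mem_strF : Y ∈ strF S ↔ shatters S Y := by
  simp [strF]

lemma mem_sstrF : Y ∈ sstrF S ↔ stronglyShatters S Y := by
  simp [sstrF]

lemma card_strF_filter_add_card_strF_filter_le (x : α) :
    (strF (S.filter (· x = false))).card + (strF (S.filter (· x = true))).card ≤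
      (strF S).card := by
  set A := strF (S.filter (· x = false))
  set B := strF (S.filter (· x = true))
  have hx : ∀ Y ∈ A ∪ B, x ∉ Y := by
    simp only [A, B, mem_union, mem_strF]
    rintro Y (h | h) <;> exact notMem_of_shatters_filter h
  have hunion : A ∪ B ⊆ strF S := by
    simp only [A, B, subset_iff, mem_union, mem_strF]
    rintro Y (h | h) <;> exact h.mono (filter_subset _ _)
  have hinsert : (A ∩ B).image (insert x) ⊆ strF S := by
    simp only [A, B, subset_iff, mem_image, mem_inter, mem_strF]
    rintro _ ⟨Y, ⟨h₀, h₁⟩, rfl⟩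
    exact shatters_insert_of_forall_shatters_filter (Bool.forall_bool.2 ⟨h₀, h₁⟩)
  have hdisj : Disjoint (A ∪ B) ((A ∩ B).image (insert x)) := by
    simp only [disjoint_right, mem_image]
    rintro _ ⟨Y, -, rfl⟩ hY
    exact hx _ hY (mem_insert_self x Y)
  have hinj : Set.InjOn (insert x : Finset α → Finset α) ↑(A ∩ B) := by
    intro Y hY Z hZ h
    rw [← erase_insert (hx Y (inter_subset_union hY)),
      ← erase_insert (hx Z (inter_subset_union hZ)), h]
  calc A.card + B.card = (A ∪ B).card + (A ∩ B).card := (card_union_add_card_inter A B).symm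
    _ = (A ∪ B ∪ (A ∩ B).image (insert x)).card := by
      rw [card_union_of_disjoint hdisj, card_image_of_injOn hinj]
    _ ≤ (strF S).card := card_le_card (union_subset hunion hinsert)

lemma card_sstrF_le_card_sstrF_filter_add_card_sstrF_filter (x : α) :
    (sstrF S).card ≤
      (sstrF (S.filter (· x = false))).card + (sstrF (S.filter (· x = true))).card := by
  set A := sstrF (S.filter (· x = false))
  set B := sstrF (S.filter (· x = true))
  have hmem : ∀ Y ∈ (sstrF S).filter (x ∈ ·), Y.erase x ∈ A ∩ B := by
    simp only [A, B, mem_filter, mem_inter, mem_sstrF]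
    rintro Y ⟨h, hx⟩
    exact ⟨h.filter_erase hx false, h.filter_erase hx true⟩
  have hnotMem : (sstrF S).filter (x ∉ ·) ⊆ A ∪ B := by
    simp only [A, B, subset_iff, mem_filter, mem_union, mem_sstrF]
    rintro Y ⟨h, hx⟩
    obtain ⟨b, hb⟩ := h.exists_filter_of_notMem hx
    cases b
    exacts [.inl hb, .inr hb]
  calc (sstrF S).card
      = ((sstrF S).filter (x ∈ ·)).card + ((sstrF S).filter (x ∉ ·)).card :=
        (card_filter_add_card_filter_not _).symm
    _ ≤ (A ∩ B).card + (A ∪ B).card := by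
      refine add_le_add (card_le_card_of_injOn _ hmem ((erase_injOn' x).mono ?_))
        (card_le_card hnotMem)
      intro Y hY
      exact (mem_filter.1 hY).2
    _ = A.card + B.card := by rw [add_comm, card_union_add_card_inter]

lemma sandwich_of_card_le_one (hS : S.card ≤ 1) :
    (sstrF S).card ≤ S.card ∧ S.card ≤ (strF S).card := by
  have hcard : (S.image fun _ => (∅ : Finset α)).card = S.card :=
    card_image_of_injOn ((card_le_one_iff_subsingleton.1 hS).injOn _)
  refine ⟨hcard ▸ card_le_card fun Y hY => ?_, hcard ▸ card_le_card fun Y hY => ?_⟩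
  · have h := mem_sstrF.1 hY
    obtain ⟨s, hs⟩ := h.nonempty
    exact mem_image.2 ⟨s, hs, (h.eq_empty_of_card_le_one hS).symm⟩
  · obtain ⟨s, hs, rfl⟩ := mem_image.1 hY
    exact mem_strF.2 (shatters_empty_of_nonempty ⟨s, hs⟩)

theorem stmt3 (S : Finset (α → Bool)) :
    (sstrF S).card ≤ S.card ∧ S.card ≤ (strF S).card := by
  induction S using Finset.strongInduction with
  | H S ih =>
  by_cases hS : S.card ≤ 1
  · exact sandwich_of_card_le_one hS
  obtain ⟨x, hx⟩ := exists_forall_filter_apply_eq_ssubset (not_le.1 hS)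
  obtain ⟨ih₀, ih₀'⟩ := ih _ (hx false)
  obtain ⟨ih₁, ih₁'⟩ := ih _ (hx true)
  have hsplit := card_filter_eq_false_add_card_filter_eq_true S (· x)
  constructor
  · calc (sstrF S).card
        ≤ (sstrF (S.filter (· x = false))).card + (sstrF (S.filter (· x = true))).card :=
          card_sstrF_le_card_sstrF_filter_add_card_sstrF_filter x
      _ ≤ S.card := hsplit ▸ add_le_add ih₀ ih₁
  · calc S.card
        ≤ (strF (S.filter (· x = false))).card + (strF (S.filter (· x = true))).card :=
          hsplit ▸ add_le_add ih₀' ih₁'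
      _ ≤ (strF S).card := card_strF_filter_add_card_strF_filter_le x
end

section
/- (Sauer–Shelah lemma) For every finite set X with |X| = n and S ⊆ {0,1}^X, |S| ≤ Σ_{i=0}^{d} C(n,i), where d is the VC-dimension of S (the maximum cardinality of a shattered subset of X). -/
open Finset

variable {α : Type*} [Fintype α] [DecidableEq α]

/-! Identifying `f : α → Bool` with the set `f⁻¹(true)` turns `S` into a set family, whose
shattered sets (in the sense of `Finset.Shatters`) are shattered by `S`. Pajor's bound
`#𝒜 ≤ #𝒜.shatterer` together with the count of sets of size at most the VC-dimension then gives
the Sauer–Shelah bound. -/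

def trueSet (f : α → Bool) : Finset α := univ.filter (f · = true)

omit [DecidableEq α] in
lemma mem_trueSet {f : α → Bool} {a : α} : a ∈ trueSet f ↔ f a = true := by
  simp [trueSet]

omit [DecidableEq α] in
lemma trueSet_injective : Function.Injective (trueSet (α := α)) := by
  intro f g hfg
  funext a
  rw [Bool.eq_iff_iff, ← mem_trueSet, ← mem_trueSet, hfg]

lemma shatters_of_shatters_image_trueSet {S : Finset (α → Bool)} {Y : Finset α}
    (hY : (S.image trueSet).Shatters Y) : shatters S Y := by
  intro f
  obtain ⟨_, hu, hYu⟩ := hY (filter_subset (f · = true) Y)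
  obtain ⟨s, hs, rfl⟩ := mem_image.1 hu
  refine ⟨s, hs, fun a ha => ?_⟩
  have hmem := congrArg (a ∈ ·) hYu
  simp only [mem_inter, mem_filter, mem_trueSet, ha, true_and, eq_iff_iff] at hmem
  exact Bool.eq_iff_iff.2 hmem

theorem card_le_sum_choose_of_forall_shatters_card_le (S : Finset (α → Bool)) (d : ℕ)
    (hd : ∀ Y, shatters S Y → Y.card ≤ d) :
    S.card ≤ ∑ i ∈ range (d + 1), (Fintype.card α).choose i := by
  set 𝒜 := S.image trueSet
  have hvc : 𝒜.vcDim ≤ d :=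
    Finset.sup_le fun Y hY => hd Y (shatters_of_shatters_image_trueSet (mem_shatterer.1 hY))
  calc S.card = 𝒜.card := (card_image_of_injective S trueSet_injective).symm
    _ ≤ 𝒜.shatterer.card := card_le_card_shatterer 𝒜
    _ ≤ ∑ k ∈ Iic 𝒜.vcDim, (Fintype.card α).choose k := card_shatterer_le_sum_vcDim
    _ ≤ ∑ k ∈ range (d + 1), (Fintype.card α).choose k := by
      refine sum_le_sum_of_subset fun k hk => mem_range.2 ?_
      have := mem_Iic.1 hk
      omega

theorem stmt4_general (S : Finset (α → Bool)) (d : ℕ)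
    (hd : IsGreatest {n : ℕ | ∃ Y : Finset α, shatters S Y ∧ Y.card = n} d) :
    S.card ≤ ∑ i ∈ Finset.range (d + 1), (Fintype.card α).choose i :=
  card_le_sum_choose_of_forall_shatters_card_le S d fun Y hY => hd.2 ⟨Y, hY, rfl⟩

theorem stmt4 (S : Finset (α → Bool)) (hS : S.Nonempty) (d : ℕ)
    (hd : IsGreatest {n : ℕ | ∃ Y : Finset α, shatters S Y ∧ Y.card = n} d) :
    S.card ≤ ∑ i ∈ Finset.range (d + 1), (Fintype.card α).choose i :=
  stmt4_general S d hd
end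

section
/- A finite set system S ⊆ {0,1}^X is shattering-extremal if and only if its complement {0,1}^X \ S is shattering-extremal. -/
open Finset

variable {α : Type*} [Fintype α] [DecidableEq α]

/- Both sides say that for every `g`, some function agreeing with `g` on `Y` lies outside `S`:
on the left it is the witness itself, on the right it is `g` overwritten off `Y`. -/
theorem shatters_compl_iff (S : Finset (α → Bool)) (Y : Finset α) :
    shatters Sᶜ Y ↔ ¬ stronglyShatters S Yᶜ := by
  constructor
  · rintro hshat ⟨g, hg⟩
    obtain ⟨s, hsS, hsg⟩ := hshat g
    have hpatch : (fun a => if a ∈ Yᶜ then s a else g a) = s := by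
      funext a
      by_cases ha : a ∈ Y <;> simp [ha, hsg]
    exact mem_compl.mp hsS (hpatch ▸ hg s)
  · intro hnot g
    simp only [stronglyShatters, not_exists, not_forall] at hnot
    obtain ⟨f, hf⟩ := hnot g
    exact ⟨_, mem_compl.mpr hf, fun a ha => by simp [ha]⟩

theorem stronglyShatters_compl_iff (S : Finset (α → Bool)) (Y : Finset α) :
    stronglyShatters Sᶜ Y ↔ ¬ shatters S Yᶜ := by
  rw [← compl_compl S, shatters_compl_iff, compl_compl, compl_compl, not_not]

theorem stmt6 (S : Finset (α → Bool)) : SE S ↔ SE Sᶜ := by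
  simp only [SE, shatters_compl_iff, stronglyShatters_compl_iff, not_iff_not]
  exact compl_surjective.forall.trans (forall_congr' fun Y => Iff.comm)
end

section
/- A finite set system S ⊆ {0,1}^X is shattering-extremal if and only if it is lopsided, i.e., for every partition {X', X''} of X, exactly one of the following holds: S contains an X'-cube, or the complement of S contains an X''-cube. -/
/-!
`S` strongly shatters `Y` exactly when it contains a `Y`-cube, and `S` fails to shatter `Y`
exactly when some pattern `f` on `Y` is missed by `S`, i.e. when `Sᶜ` contains the `Yᶜ`-cube of
all functions agreeing with `f` on `Y`. So shattering-extremality says, for every `Y`, that `S`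
contains a `Y`-cube iff `Sᶜ` contains no `Yᶜ`-cube, which is the exclusive or.
-/

open Finset

variable {α : Type*} [Fintype α] [DecidableEq α]

/-- `S` contains the `Y`-cube determined by `g` (values outside `Y` fixed by `g`). -/
def containsCube (S : Finset (α → Bool)) (Y : Finset α) : Prop :=
  ∃ g : α → Bool, ∀ h : α → Bool, (∀ a ∉ Y, h a = g a) → h ∈ S

lemma stronglyShatters_iff_containsCube {α : Type*} [DecidableEq α] (S : Finset (α → Bool))
    (Y : Finset α) :
    stronglyShatters S Y ↔ containsCube S Y := by
  constructor
  · rintro ⟨g, hg⟩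
    refine ⟨g, fun h hh => ?_⟩
    convert hg h using 1
    funext a
    split_ifs with ha
    · rfl
    · exact hh a ha
  · rintro ⟨g, hg⟩
    exact ⟨g, fun f => hg _ fun a ha => if_neg ha⟩

lemma shatters_iff_not_containsCube_compl (S : Finset (α → Bool)) (Y : Finset α) :
    shatters S Y ↔ ¬ containsCube Sᶜ Yᶜ := by
  simp only [shatters, containsCube, mem_compl, not_not]
  constructor
  · rintro hS ⟨f, hf⟩
    obtain ⟨s, hs, hsf⟩ := hS f
    exact hf s hsf hs
  · intro hS f
    by_contra! hmiss
    exact hS ⟨f, fun s hsf hs =>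
      let ⟨a, ha, hne⟩ := hmiss s hs
      hne (hsf a ha)⟩

theorem stmt7 (S : Finset (α → Bool)) :
    SE S ↔ ∀ X' : Finset α, Xor' (containsCube S X') (containsCube Sᶜ X'ᶜ) := by
  refine forall_congr' fun Y => ?_
  rw [stronglyShatters_iff_containsCube, shatters_iff_not_containsCube_compl]
  exact Iff.comm.trans xor_iff_iff_not.symm
end

section
/- A finite set system S ⊆ {0,1}^X is shattering-extremal if and only if for every partition {X', X''} of X, exactly one of the following holds: S shatters X', or the complement of S shatters X''. -/
open Finset

variable {α : Type*} [Fintype α] [DecidableEq α]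

/- `s` agrees with `g` off `Y` exactly when patching `g` with `s` on `Y` gives back `s`. -/
theorem shatters_compl_compl_iff_not_stronglyShatters (S : Finset (α → Bool)) (Y : Finset α) :
    shatters Sᶜ Yᶜ ↔ ¬ stronglyShatters S Y := by
  simp only [shatters, stronglyShatters, not_exists, not_forall]
  constructor
  · intro h g
    obtain ⟨s, hs, hsg⟩ := h g
    have patch_eq : (fun a => if a ∈ Y then s a else g a) = s := by
      funext a
      by_cases ha : a ∈ Y
      · simp only [ha, if_true]
      · simp only [ha, if_false, hsg a (mem_compl.2 ha)]
    exact ⟨s, by rw [patch_eq]; exact mem_compl.1 hs⟩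
  · intro h g
    obtain ⟨f, hf⟩ := h g
    exact ⟨_, mem_compl.2 hf, fun a ha => by simp only [mem_compl.1 ha, if_false]⟩

theorem stmt8 (S : Finset (α → Bool)) :
    SE S ↔ ∀ X' : Finset α, Xor' (shatters S X') (shatters Sᶜ X'ᶜ) := by
  refine forall_congr' fun X' => ?_
  rw [shatters_compl_compl_iff_not_stronglyShatters]
  exact xor_not_right.symm
end

section
/- For S ⊆ {0,1}^X and distinct x, y ∈ X: ∪_{{y}}(∩_{{x}}(S)) ⊆ ∩_{{x}}(∪_{{y}}(S)); moreover if S is shattering-extremal then equality holds. -/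
/-!
Swapping the order of an existential and a universal projection along two distinct coordinates
gives the inclusion, since updates at distinct coordinates commute. For the converse, take
`f ∈ ∩_{x}(∪_{y}(S))` and restrict `S` to the subcube of functions agreeing with `f` off `{x, y}`.
This subfamily shatters `{x}`; shattering-extremality is inherited by subcubes, so it strongly
shatters `{x}`, and the value at `y` of a witness puts `f` into `∪_{y}(∩_{x}(S))`.
-/

open Finset

variable {α : Type*} [Fintype α] [DecidableEq α]

open Classical in
/-- Project `S` onto the coordinates outside `Y` (existential image), padding `Y` with `false`. -/
noncomputable def unionOp (Y : Finset α) (S : Finset (α → Bool)) : Finset (α → Bool) :=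
  Finset.univ.filter (fun f => (∀ a ∈ Y, f a = false) ∧
    ∃ g : α → Bool, (fun a => if a ∈ Y then g a else f a) ∈ S)

open Classical in
/-- Project `S` onto the coordinates outside `Y` (universal image), padding `Y` with `false`. -/
noncomputable def interOp (Y : Finset α) (S : Finset (α → Bool)) : Finset (α → Bool) :=
  Finset.univ.filter (fun f => (∀ a ∈ Y, f a = false) ∧
    ∀ g : α → Bool, (fun a => if a ∈ Y then g a else f a) ∈ S)

section
omit [Fintype α]

omit [DecidableEq α] in
theorem shatters.mono_s15 {S S' : Finset (α → Bool)} {Y : Finset α} (h : S ⊆ S')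
    (hS : shatters S Y) : shatters S' Y := fun f =>
  let ⟨s, hs, hsY⟩ := hS f
  ⟨s, h hs, hsY⟩

theorem shatters_of_stronglyShatters {S : Finset (α → Bool)} {Y : Finset α}
    (h : stronglyShatters S Y) : shatters S Y := by
  obtain ⟨g, hg⟩ := h
  exact fun f => ⟨_, hg f, fun a ha => by simp [ha]⟩

theorem SE.filter_apply_eq {S : Finset (α → Bool)} (hS : SE S) (z : α) (b : Bool) :
    SE {s ∈ S | s z = b} := by
  intro Y
  refine ⟨fun hsh => ?_, shatters_of_stronglyShatters⟩
  have hz : z ∉ Y := by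
    intro hz
    obtain ⟨s, hs, hsY⟩ := hsh fun _ => !b
    simpa [(mem_filter.1 hs).2] using hsY z hz
  obtain ⟨g₀, hg₀⟩ := (hS Y).1 (hsh.mono_s15 (filter_subset _ S))
  by_cases hg₀z : g₀ z = b
  · exact ⟨g₀, fun f => mem_filter.2 ⟨hg₀ f, by simp [hz, hg₀z]⟩⟩
  -- The cube through `g₀` lies off `{s | s z = b}` and supplies the extensions with `z ↦ !b`.
  have hshz : shatters S (insert z Y) := by
    intro f
    by_cases hfz : f z = b
    · obtain ⟨s, hs, hsY⟩ := hsh f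
      obtain ⟨hsS, hsz⟩ := mem_filter.1 hs
      exact ⟨s, hsS, forall_mem_insert _ _ _ |>.2 ⟨hsz.trans hfz.symm, hsY⟩⟩
    · refine ⟨_, hg₀ f, forall_mem_insert _ _ _ |>.2 ⟨?_, fun a ha => by simp [ha]⟩⟩
      simp only [hz, if_false]
      cases b <;> simp_all
  obtain ⟨g₁, hg₁⟩ := (hS _).1 hshz
  refine ⟨Function.update g₁ z b, fun f => mem_filter.2 ⟨?_, by simp [hz]⟩⟩
  convert hg₁ (Function.update f z b) using 1
  funext a
  by_cases haz : a = z
  · subst haz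
    simp [hz]
  · by_cases haY : a ∈ Y <;> simp [haz, haY]

theorem ite_mem_singleton_eq_update (z : α) (f g : α → Bool) :
    (fun a => if a ∈ ({z} : Finset α) then f a else g a) = Function.update g z (f z) := by
  funext a
  by_cases h : a = z
  · subst h
    simp
  · simp [h]

omit [DecidableEq α] in
theorem shatters_singleton {S : Finset (α → Bool)} {z : α} :
    shatters S {z} ↔ ∀ b, ∃ s ∈ S, s z = b := by
  simp only [shatters, mem_singleton, forall_eq]
  exact ⟨fun h b => h fun _ => b, fun h f => h (f z)⟩

theorem stronglyShatters_singleton {S : Finset (α → Bool)} {z : α} :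
    stronglyShatters S {z} ↔ ∃ g, ∀ b, Function.update g z b ∈ S := by
  simp only [stronglyShatters, ite_mem_singleton_eq_update]
  exact exists_congr fun g => ⟨fun h b => h fun _ => b, fun h f => h (f z)⟩

end

theorem SE.filter_agreeOn {S : Finset (α → Bool)} (hS : SE S) (f : α → Bool) (T : Finset α) :
    SE {s ∈ S | ∀ a ∈ T, s a = f a} := by
  induction T using Finset.induction_on with
  | empty => simpa using hS
  | insert z T _ ih =>
    simpa only [forall_mem_insert, and_comm, filter_filter] using ih.filter_apply_eq z (f z)

theorem mem_unionOp_singleton {S : Finset (α → Bool)} {z : α} {f : α → Bool} :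
    f ∈ unionOp {z} S ↔ f z = false ∧ ∃ b, Function.update f z b ∈ S := by
  simp only [unionOp, mem_filter, mem_univ, true_and, ite_mem_singleton_eq_update]
  simp only [mem_singleton, forall_eq]
  exact and_congr_right fun _ => ⟨fun ⟨g, h⟩ => ⟨g z, h⟩, fun ⟨b, h⟩ => ⟨fun _ => b, h⟩⟩

theorem mem_interOp_singleton {S : Finset (α → Bool)} {z : α} {f : α → Bool} :
    f ∈ interOp {z} S ↔ f z = false ∧ ∀ b, Function.update f z b ∈ S := by
  simp only [interOp, mem_filter, mem_univ, true_and, ite_mem_singleton_eq_update]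
  simp only [mem_singleton, forall_eq]
  exact and_congr_right fun _ => ⟨fun h b => h fun _ => b, fun h g => h (g z)⟩

theorem unionOp_interOp_subset_interOp_unionOp (S : Finset (α → Bool)) {x y : α} (hxy : x ≠ y) :
    unionOp {y} (interOp {x} S) ⊆ interOp {x} (unionOp {y} S) := by
  intro f hf
  obtain ⟨hfy, b, hb⟩ := mem_unionOp_singleton.1 hf
  obtain ⟨hfx, hbc⟩ := mem_interOp_singleton.1 hb
  refine mem_interOp_singleton.2 ⟨by simpa [hxy] using hfx, fun c =>
    mem_unionOp_singleton.2 ⟨by simpa [hxy.symm] using hfy, b, ?_⟩⟩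
  rw [Function.update_comm hxy]
  exact hbc c

theorem SE.interOp_unionOp_subset_unionOp_interOp {S : Finset (α → Bool)} (hS : SE S) {x y : α}
    (hxy : x ≠ y) : interOp {x} (unionOp {y} S) ⊆ unionOp {y} (interOp {x} S) := by
  intro f hf
  obtain ⟨hfx, hf⟩ := mem_interOp_singleton.1 hf
  have hfy : f y = false := by
    simpa [hxy.symm] using (mem_unionOp_singleton.1 (hf false)).1
  set T : Finset α := {x, y}ᶜ
  have hshat : shatters {s ∈ S | ∀ a ∈ T, s a = f a} {x} := by
    refine shatters_singleton.2 fun c => ?_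
    obtain ⟨-, b, hb⟩ := mem_unionOp_singleton.1 (hf c)
    refine ⟨_, mem_filter.2 ⟨hb, fun a ha => ?_⟩, by simp [hxy]⟩
    simp only [T, mem_compl, mem_insert, mem_singleton, not_or] at ha
    simp [ha.1, ha.2]
  obtain ⟨g, hg⟩ := stronglyShatters_singleton.1 (((hS.filter_agreeOn f T) {x}).1 hshat)
  have hgf : ∀ c, Function.update (Function.update f y (g y)) x c = Function.update g x c := by
    intro c
    funext a
    by_cases hax : a = x
    · subst hax
      simp
    by_cases hay : a = y
    · subst hay
      simp [hax]
    have hga := (mem_filter.1 (hg c)).2 a (by simp [T, hax, hay])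
    simp_all
  exact mem_unionOp_singleton.2 ⟨hfy, g y, mem_interOp_singleton.2
    ⟨by simpa [hxy] using hfx, fun c => hgf c ▸ (mem_filter.1 (hg c)).1⟩⟩

theorem stmt15 (S : Finset (α → Bool)) {x y : α} (hxy : x ≠ y) :
    unionOp {y} (interOp {x} S) ⊆ interOp {x} (unionOp {y} S) ∧
    (SE S → unionOp {y} (interOp {x} S) = interOp {x} (unionOp {y} S)) :=
  ⟨unionOp_interOp_subset_interOp_unionOp S hxy, fun hS =>
    (unionOp_interOp_subset_interOp_unionOp S hxy).antisymm
      (hS.interOp_unionOp_subset_unionOp_interOp hxy)⟩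
end

section
/- Let S ⊆ {0,1}^X, x ∈ X, and let D_x(S) be the down-shift of S on x (for each x-edge {u₀,u₁} with u₀ ≤ u₁: if exactly one of u₀,u₁ is in S, put the lower vertex u₀ in D_x(S) and remove u₁; otherwise keep membership unchanged). If S is shattering-extremal, then D_x(S) is shattering-extremal. -/
open Finset

variable {α : Type*} [Fintype α] [DecidableEq α]

/-- Down-shift of `S` on coordinate `x`: sort every `x`-edge. -/
def downShift (S : Finset (α → Bool)) (x : α) : Finset (α → Bool) :=
  Finset.univ.filter (fun f =>
    if f x = true then f ∈ S ∧ Function.update f x false ∈ S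
    else f ∈ S ∨ Function.update f x true ∈ S)

/-!
Down-shifting can only lose shattered sets and can only gain strongly shattered ones. Indeed,
every member of `downShift S x` has some `x`-neighbour in `S`, and those with `x`-coordinate
`true` have both, so a set shattered after the shift was shattered before. Conversely, if every
assignment on `Y`, completed by `g` off `Y`, lies in `S`, then the same holds in `downShift S x`
with `g` replaced by `g` with its `x`-coordinate lowered. Hence `str (downShift S x) ⊆ str S = sstr S ⊆ sstr (downShift S x)`, and
`sstr ⊆ str` always holds.
-/

open Function

theorem stronglyShatters.shatters {α : Type*} [DecidableEq α] {S : Finset (α → Bool)}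
    {Y : Finset α} (h : stronglyShatters S Y) : shatters S Y := by
  obtain ⟨g, hg⟩ := h
  exact fun f => ⟨_, hg f, fun a ha => Finset.piecewise_eq_of_mem _ _ _ ha⟩

section downShift

variable {S : Finset (α → Bool)} {x : α} {f : α → Bool}

theorem mem_downShift :
    f ∈ downShift S x ↔
      if f x = true then f ∈ S ∧ update f x false ∈ S else f ∈ S ∨ update f x true ∈ S := by
  simp [downShift]

theorem update_mem_of_mem_downShift_of_apply_eq_true (hf : f ∈ downShift S x)
    (hfx : f x = true) (b : Bool) : update f x b ∈ S := by
  rw [mem_downShift, if_pos hfx] at hf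
  cases b
  · exact hf.2
  · simpa [← hfx] using hf.1

theorem exists_update_mem_of_mem_downShift (hf : f ∈ downShift S x) :
    ∃ b, update f x b ∈ S := by
  by_cases hfx : f x = true
  · exact ⟨true, update_mem_of_mem_downShift_of_apply_eq_true hf hfx true⟩
  · rw [mem_downShift, if_neg hfx] at hf
    rcases hf with hf | hf
    · exact ⟨f x, by simpa using hf⟩
    · exact ⟨true, hf⟩

theorem mem_downShift_of_forall_update_mem (h : ∀ b, update f x b ∈ S) : f ∈ downShift S x := by
  have hf : f ∈ S := by simpa using h (f x)
  rw [mem_downShift]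
  split_ifs
  exacts [⟨hf, h false⟩, Or.inl hf]

theorem mem_downShift_of_apply_eq_false (hfx : f x = false) {b : Bool}
    (h : update f x b ∈ S) : f ∈ downShift S x := by
  rw [mem_downShift, if_neg (by simp [hfx])]
  cases b
  · exact Or.inl (by simpa [← hfx] using h)
  · exact Or.inr h

theorem shatters.of_downShift {Y : Finset α} (h : shatters (downShift S x) Y) :
    shatters S Y := by
  intro f
  by_cases hxY : x ∈ Y
  · obtain ⟨s, hs, hsf⟩ := h (update f x true)
    have hsx : s x = true := by simpa using hsf x hxY
    refine ⟨update s x (f x), update_mem_of_mem_downShift_of_apply_eq_true hs hsx _,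
      fun a ha => ?_⟩
    rcases eq_or_ne a x with rfl | hax
    · simp
    · simpa [update_of_ne hax] using hsf a ha
  · obtain ⟨s, hs, hsf⟩ := h f
    obtain ⟨b, hb⟩ := exists_update_mem_of_mem_downShift hs
    refine ⟨update s x b, hb, fun a ha => ?_⟩
    rw [update_of_ne (ne_of_mem_of_not_mem ha hxY)]
    exact hsf a ha

theorem stronglyShatters.downShift {Y : Finset α} (h : stronglyShatters S Y) :
    stronglyShatters (downShift S x) Y := by
  obtain ⟨g, hg⟩ := h
  change ∀ f, Y.piecewise f g ∈ S at hg
  by_cases hxY : x ∈ Y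
  · refine ⟨g, fun f => mem_downShift_of_forall_update_mem (f := Y.piecewise f g) fun b => ?_⟩
    rw [Y.update_piecewise_of_mem f g hxY]
    exact hg _
  · refine ⟨update g x false, fun f => ?_⟩
    refine mem_downShift_of_apply_eq_false (f := Y.piecewise f (update g x false)) (b := g x)
      (by simp [hxY]) ?_
    rw [Y.update_piecewise_of_notMem f _ hxY, update_idem, update_eq_self]
    exact hg f

end downShift

theorem stmt17 (S : Finset (α → Bool)) (x : α) (h : SE S) : SE (downShift S x) :=
  fun Y => ⟨fun hY => ((h Y).mp hY.of_downShift).downShift, stronglyShatters.shatters⟩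
end

section
/- Let G = (V, E) be a finite undirected simple graph, W ⊆ V, and s ∈ W. The number of orientations of E such that every w ∈ W is reachable from s by a directed path equals the number of subsets X ⊆ E such that all vertices of W lie in the same connected component of the subgraph (V, X). -/
/-!
Both counts satisfy the same deletion–contraction recurrence once we allow a fixed extra
relation `ρ` on the vertices, standing for edges that are already contracted. Take a new edge
`uv` and let `S` be the set of vertices reached from `s` without it. If `u ∈ S`, orienting the
edge `v → u` changes nothing while `u → v` makes it as useful as the undirected edge; if `v ∈ S`
the same holds with the roles swapped, and if neither lies in `S` the edge is useless. So the two
orientations of `uv` together count what deleting `uv` and adding it to `ρ` count, and an edge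
subset splits the same way according to whether it contains `uv`.
-/

/-- `r` is an orientation of the edges of `G`: oriented pairs are edges, and each
edge gets exactly one of its two directions. -/
def IsOrientation {V : Type*} (G : SimpleGraph V) (r : V → V → Bool) : Prop :=
  (∀ u v, r u v = true → G.Adj u v) ∧
  (∀ u v, G.Adj u v → Xor' (r u v = true) (r v u = true))

open Finset Relation

namespace Relation

variable {α : Type*}

def arc (u v : α) : α → α → Prop := fun x y => x = u ∧ y = v

def ReachesAll (R : α → α → Prop) (s : α) (W : Set α) : Prop :=
  ∀ w ∈ W, ReflTransGen R s w

variable {R : α → α → Prop} {s u v : α}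

theorem reflTransGen_sup_arc_eq (h : ReflTransGen R s u → ReflTransGen R s v) :
    ReflTransGen (R ⊔ arc u v) s = ReflTransGen R s := by
  funext x
  refine propext ⟨fun hx => ?_, ReflTransGen.mono le_sup_left _ _⟩
  induction hx with
  | refl => exact .refl
  | tail _ hstep ih =>
    rcases hstep with hstep | ⟨rfl, rfl⟩
    · exact ih.tail hstep
    · exact h ih

theorem reflTransGen_sup_arc_sup_arc_eq (h : ReflTransGen R s u) :
    ReflTransGen (R ⊔ arc u v ⊔ arc v u) s = ReflTransGen (R ⊔ arc u v) s :=
  reflTransGen_sup_arc_eq fun _ => ReflTransGen.mono le_sup_left _ _ h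

theorem reflTransGen_sup_arc_sup_arc_eq_of_not (hu : ¬ ReflTransGen R s u)
    (hv : ¬ ReflTransGen R s v) :
    ReflTransGen (R ⊔ arc u v ⊔ arc v u) s = ReflTransGen R s := by
  have huv : ReflTransGen (R ⊔ arc u v) s = ReflTransGen R s :=
    reflTransGen_sup_arc_eq (absurd · hu)
  rw [reflTransGen_sup_arc_eq (by rw [huv]; exact (absurd · hv)), huv]

theorem reachesAll_congr {R' : α → α → Prop} (h : ReflTransGen R s = ReflTransGen R' s)
    (W : Set α) : ReachesAll R s W ↔ ReachesAll R' s W := by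
  simp only [ReachesAll, h]

theorem reachesAll_sup_arc_pair (R : α → α → Prop) (s u v : α) (W : Set α) :
    (ReachesAll (R ⊔ arc u v) s W ↔ ReachesAll R s W) ∧
        (ReachesAll (R ⊔ arc v u) s W ↔ ReachesAll (R ⊔ (arc u v ⊔ arc v u)) s W) ∨
      (ReachesAll (R ⊔ arc u v) s W ↔ ReachesAll (R ⊔ (arc u v ⊔ arc v u)) s W) ∧
        (ReachesAll (R ⊔ arc v u) s W ↔ ReachesAll R s W) := by
  rw [← sup_assoc]
  by_cases hu : ReflTransGen R s u
  · refine .inr ⟨reachesAll_congr (reflTransGen_sup_arc_sup_arc_eq hu).symm W,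
      reachesAll_congr (reflTransGen_sup_arc_eq fun _ => hu) W⟩
  refine .inl ⟨reachesAll_congr (reflTransGen_sup_arc_eq (absurd · hu)) W, ?_⟩
  by_cases hv : ReflTransGen R s v
  · rw [sup_right_comm R]
    exact reachesAll_congr (reflTransGen_sup_arc_sup_arc_eq hv).symm W
  · rw [reachesAll_congr (reflTransGen_sup_arc_eq (absurd · hv)) W,
      reachesAll_congr (reflTransGen_sup_arc_sup_arc_eq_of_not hu hv) W]

end Relation

section Multigraph

variable {ι V : Type*} (a b : ι → V)

/-- The orientation of the multigraph with edges `E` and endpoint maps `a`, `b` that directs the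
edges of `D` from `a i` to `b i` and the others from `b i` to `a i`. -/
def orientedStep (E D : Finset ι) (x y : V) : Prop :=
  ∃ i ∈ E, (i ∈ D ∧ a i = x ∧ b i = y) ∨ (i ∉ D ∧ a i = y ∧ b i = x)

def undirectedStep (X : Finset ι) (x y : V) : Prop :=
  ∃ i ∈ X, (a i = x ∧ b i = y) ∨ (a i = y ∧ b i = x)

@[simp]
theorem orientedStep_empty (D : Finset ι) : orientedStep a b ∅ D = ⊥ := by
  funext x y
  simp [orientedStep]

@[simp]
theorem undirectedStep_empty : undirectedStep a b (∅ : Finset ι) = ⊥ := by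
  funext x y
  simp [undirectedStep]

variable [DecidableEq ι] {a b} {e : ι}

theorem orientedStep_insert_of_notMem {E D : Finset ι} (he : e ∉ D) :
    orientedStep a b (insert e E) D = orientedStep a b E D ⊔ arc (b e) (a e) := by
  ext x y
  simp only [orientedStep, exists_mem_insert, he, Pi.sup_apply, sup_Prop_eq, arc]
  grind

theorem orientedStep_insert_insert {E : Finset ι} (he : e ∉ E) (D : Finset ι) :
    orientedStep a b (insert e E) (insert e D) = orientedStep a b E D ⊔ arc (a e) (b e) := by
  ext x y
  simp only [orientedStep, exists_mem_insert, mem_insert_self, Pi.sup_apply, sup_Prop_eq, arc]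
  grind

theorem undirectedStep_insert (X : Finset ι) :
    undirectedStep a b (insert e X) =
      undirectedStep a b X ⊔ arc (a e) (b e) ⊔ arc (b e) (a e) := by
  ext x y
  simp only [undirectedStep, exists_mem_insert, Pi.sup_apply, sup_Prop_eq, arc]
  grind

variable (a b) in
open Classical in
theorem card_reachesAll_orientedStep_sup_eq (s : V) (W : Set V) (E : Finset ι)
    (ρ : V → V → Prop) :
    #{D ∈ E.powerset | ReachesAll (orientedStep a b E D ⊔ ρ) s W} =
      #{X ∈ E.powerset | ReachesAll (undirectedStep a b X ⊔ ρ) s W} := by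
  induction E using Finset.induction_on generalizing ρ with
  | empty => simp only [powerset_empty, filter_singleton, orientedStep_empty, undirectedStep_empty]
  | insert e E he ih =>
    have horient : ∀ D ∈ E.powerset,
        (if ReachesAll (orientedStep a b (insert e E) D ⊔ ρ) s W then 1 else 0) +
          (if ReachesAll (orientedStep a b (insert e E) (insert e D) ⊔ ρ) s W then 1 else 0) =
        (if ReachesAll (orientedStep a b E D ⊔ ρ) s W then 1 else 0) +
          (if ReachesAll (orientedStep a b E D ⊔ (ρ ⊔ (arc (a e) (b e) ⊔ arc (b e) (a e)))) s W
            then 1 else 0) := by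
      intro D hD
      rw [← sup_assoc, orientedStep_insert_of_notMem fun h => he (mem_powerset.1 hD h),
        orientedStep_insert_insert he, sup_right_comm, sup_right_comm _ (arc (a e) (b e))]
      rcases reachesAll_sup_arc_pair (orientedStep a b E D ⊔ ρ) s (a e) (b e) W with
        ⟨h₁, h₂⟩ | ⟨h₁, h₂⟩ <;> simp only [h₁, h₂, add_comm]
    have hconn : ∀ X : Finset ι, undirectedStep a b (insert e X) ⊔ ρ =
        undirectedStep a b X ⊔ (ρ ⊔ (arc (a e) (b e) ⊔ arc (b e) (a e))) := by
      intro X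
      rw [undirectedStep_insert]
      ac_rfl
    rw [card_filter, sum_powerset_insert he, ← sum_add_distrib, sum_congr rfl horient,
      sum_add_distrib, ← card_filter, ← card_filter, ih, ih, card_filter, card_filter,
      card_filter, sum_powerset_insert he]
    simp only [hconn]

end Multigraph

section SimpleGraph

variable {V : Type*} {a b : Sym2 V → V}

theorem eq_mk_iff_endpoints (hab : ∀ e, s(a e, b e) = e) {e : Sym2 V} {x y : V} :
    e = s(x, y) ↔ (a e = x ∧ b e = y) ∨ (a e = y ∧ b e = x) := by
  conv_lhs => rw [← hab e]
  exact Sym2.eq_iff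

theorem undirectedStep_iff (hab : ∀ e, s(a e, b e) = e) {X : Finset (Sym2 V)} {x y : V} :
    undirectedStep a b X x y ↔ s(x, y) ∈ X :=
  ⟨fun ⟨_, hi, h⟩ => (eq_mk_iff_endpoints hab).2 h ▸ hi,
    fun h => ⟨_, h, (eq_mk_iff_endpoints hab).1 rfl⟩⟩

variable (G : SimpleGraph V) [Fintype G.edgeSet]

theorem orientedStep_edgeFinset_iff (hab : ∀ e, s(a e, b e) = e) {D : Finset (Sym2 V)}
    {x y : V} :
    orientedStep a b G.edgeFinset D x y ↔ G.Adj x y ∧ (s(x, y) ∈ D ↔ a s(x, y) = x) := by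
  constructor
  · rintro ⟨i, hi, h⟩
    obtain rfl : i = s(x, y) := (eq_mk_iff_endpoints hab).2 (by tauto)
    have hadj : G.Adj x y := by simpa using hi
    have hne := hadj.ne
    exact ⟨hadj, by grind⟩
  · rintro ⟨hadj, hD⟩
    have hne := hadj.ne
    have hend := (eq_mk_iff_endpoints hab (e := s(x, y))).1 rfl
    exact ⟨s(x, y), by simpa using hadj, by grind⟩

theorem isOrientation_of_iff (hab : ∀ e, s(a e, b e) = e) {D : Finset (Sym2 V)}
    {r : V → V → Bool} (hr : ∀ x y, r x y = true ↔ orientedStep a b G.edgeFinset D x y) :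
    IsOrientation G r := by
  simp only [orientedStep_edgeFinset_iff G hab] at hr
  refine ⟨fun x y h => ((hr x y).1 h).1, fun x y hadj => ?_⟩
  have hne := hadj.ne
  have hend : a s(x, y) = x ∨ a s(x, y) = y := by
    have := (eq_mk_iff_endpoints hab (e := s(x, y))).1 rfl
    tauto
  refine (xor_iff_not_iff _ _).2 ?_
  rw [hr, hr, Sym2.eq_swap]
  grind [G.adj_symm hadj]

theorem IsOrientation.eq_true_iff (hab : ∀ e, s(a e, b e) = e) {r : V → V → Bool}
    (hr : IsOrientation G r) {x y : V} :
    r x y = true ↔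
      orientedStep a b G.edgeFinset (G.edgeFinset.filter fun e => r (a e) (b e)) x y := by
  rw [orientedStep_edgeFinset_iff G hab, mem_filter, SimpleGraph.mem_edgeFinset,
    SimpleGraph.mem_edgeSet]
  have hend := (eq_mk_iff_endpoints hab (e := s(x, y))).1 rfl
  have hedge := hr.1 x y
  have hxor := fun h => (xor_iff_not_iff _ _).1 (hr.2 x y h)
  have hne := fun h : G.Adj x y => h.ne
  grind [G.adj_symm]

open Classical in
theorem filter_orientedStep_eq (hab : ∀ e, s(a e, b e) = e) {D : Finset (Sym2 V)}
    (hD : D ⊆ G.edgeFinset) :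
    G.edgeFinset.filter (fun e => orientedStep a b G.edgeFinset D (a e) (b e)) = D := by
  ext e
  rw [mem_filter, orientedStep_edgeFinset_iff G hab, hab, ← SimpleGraph.mem_edgeSet,
    ← SimpleGraph.mem_edgeFinset]
  grind

open Classical in
theorem card_isOrientation_reachesAll (hab : ∀ e, s(a e, b e) = e) (s : V) (W : Set V) :
    Nat.card {r : V → V → Bool // IsOrientation G r ∧
        ∀ w ∈ W, Relation.ReflTransGen (fun a b => r a b = true) s w} =
      #{D ∈ G.edgeFinset.powerset | ReachesAll (orientedStep a b G.edgeFinset D) s W} := by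
  have hrel : ∀ r, IsOrientation G r → (fun x y => r x y = true) =
      orientedStep a b G.edgeFinset (G.edgeFinset.filter fun e => r (a e) (b e)) :=
    fun r hr => funext₂ fun x y => propext (hr.eq_true_iff G hab)
  rw [← Nat.card_eq_finsetCard]
  refine Nat.card_congr
    { toFun := fun r => ⟨G.edgeFinset.filter fun e => r.1 (a e) (b e), ?_⟩
      invFun := fun D => ⟨fun x y => decide (orientedStep a b G.edgeFinset D x y), ?_⟩
      left_inv := fun r => ?_
      right_inv := fun D => ?_ }
  · rw [mem_filter, mem_powerset, ← hrel r.1 r.2.1]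
    exact ⟨filter_subset _ _, r.2.2⟩
  · refine ⟨isOrientation_of_iff G hab fun x y => decide_eq_true_iff, ?_⟩
    simp only [decide_eq_true_iff]
    exact (mem_filter.1 D.2).2
  · refine Subtype.ext (funext₂ fun x y => Bool.eq_iff_iff.2 ?_)
    rw [decide_eq_true_iff, ← r.2.1.eq_true_iff G hab]
  · refine Subtype.ext ?_
    simpa only [decide_eq_true_iff] using
      filter_orientedStep_eq G hab (mem_powerset.1 (mem_filter.1 D.2).1)

open Classical in
theorem card_connecting_edgeSubsets (hab : ∀ e, s(a e, b e) = e) (s : V) (W : Set V) :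
    Nat.card {X : Finset (Sym2 V) // ↑X ⊆ G.edgeSet ∧
        ∀ w ∈ W, (SimpleGraph.fromEdgeSet (↑X : Set (Sym2 V))).Reachable s w} =
      #{X ∈ G.edgeFinset.powerset | ReachesAll (undirectedStep a b X) s W} := by
  refine Nat.subtype_card _ fun X => ?_
  rw [mem_filter, mem_powerset, ← coe_subset, SimpleGraph.coe_edgeFinset]
  refine and_congr_right fun hX => forall₂_congr fun w _ => ?_
  suffices (SimpleGraph.fromEdgeSet (X : Set (Sym2 V))).Adj = undirectedStep a b X by
    rw [SimpleGraph.reachable_iff_reflTransGen, this]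
  ext x y
  rw [SimpleGraph.fromEdgeSet_adj, undirectedStep_iff hab, mem_coe]
  exact and_iff_left_of_imp fun h => (G.mem_edgeSet.1 (hX h)).ne

end SimpleGraph

theorem stmt19_general {V : Type*} [Fintype V] (G : SimpleGraph V)
    (W : Set V) (s : V) :
    Nat.card {r : V → V → Bool // IsOrientation G r ∧
        ∀ w ∈ W, Relation.ReflTransGen (fun a b => r a b = true) s w}
      = Nat.card {X : Finset (Sym2 V) // ↑X ⊆ G.edgeSet ∧
          ∀ w ∈ W, (SimpleGraph.fromEdgeSet (↑X : Set (Sym2 V))).Reachable s w} := by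
  classical
  have hab : ∀ e : Sym2 V, s((Quot.out e).1, (Quot.out e).2) = e := Quot.out_eq
  rw [card_isOrientation_reachesAll G hab, card_connecting_edgeSubsets G hab]
  simpa using card_reachesAll_orientedStep_sup_eq _ _ s W G.edgeFinset ⊥

theorem stmt19 {V : Type*} [Fintype V] [DecidableEq V] (G : SimpleGraph V)
    (W : Set V) (s : V) (hs : s ∈ W) :
    Nat.card {r : V → V → Bool // IsOrientation G r ∧
        ∀ w ∈ W, Relation.ReflTransGen (fun a b => r a b = true) s w}
      = Nat.card {X : Finset (Sym2 V) // ↑X ⊆ G.edgeSet ∧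
          ∀ w ∈ W, (SimpleGraph.fromEdgeSet (↑X : Set (Sym2 V))).Reachable s w} :=
  stmt19_general G W s
end
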